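/- arXiv:2106.02391 — 2 statements merged into one kernel-verified Lean document; each statement's English description precedes it below -/
import Mathlib

section
/- Let A ∈ ℝ^{n×n}, B ∈ ℝ^{n×m}, F ∈ ℝ^{m×n} with ρ(A + B·F) < 1, let A_F := [[A, B], [F·A, F·B]], let Λ ∈ ℝ^{(n+m)×(n+m)} be symmetric positive semidefinite, let S ∈ ℝ^{(n+m)×(n+m)} be symmetric positive definite, and set H := S·A_Fᵀ. Then the series P̂ := Σ_{k=0}^{∞} A_F^k·(A_Fᵀ)^k converges, the feasible set D := {P ∈ ℝ^{(n+m)×(n+m)} : P symmetric and Hᵀ·P·H + I ⪯ S·P·S} is nonempty, the infimum of trace(Λ·S·P·S) over P ∈ D equals trace(Λ·P̂), and this infimum is attained by some P ∈ D. -/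
/-!
Write `A_F = [I; F] * [A B]`. Since `[A B] * [I; F] = A + B F`, and a product of two rectangular
matrices has the same nonzero eigenvalues in either order, `ρ(A_F) = ρ(A + B F) < 1`. By Gelfand's
formula the powers of `A_F` then decay geometrically, so `P̂ = Σ A_F^k (A_Fᵀ)^k` converges and
solves the Lyapunov equation `P̂ = A_F P̂ A_Fᵀ + I`. As `Hᵀ P H = A_F (S P S) A_Fᵀ`, feasibility of
`P` says that `Q = S P S` satisfies `Q ⪰ A_F Q A_Fᵀ + I`; iterating,
`Q ⪰ Σ_{i<k} A_F^i (A_Fᵀ)^i + A_F^k Q (A_Fᵀ)^k → P̂`, so `trace(Λ Q) ≥ trace(Λ P̂)` for `Λ ⪰ 0`,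
with equality at `P = S⁻¹ P̂ S⁻¹`.
-/

open Matrix

/-- The spectral radius of a real square matrix: the supremum of the moduli of the
elements of the spectrum of the matrix regarded as a complex matrix. -/
noncomputable def specRad {N : Type*} [Fintype N] [DecidableEq N] (M : Matrix N N ℝ) : ℝ :=
  sSup ((fun z => ‖z‖) '' spectrum ℂ (M.map Complex.ofReal))

open Filter Topology

namespace Matrix

theorem map_ofReal_mul {l m n : Type*} [Fintype m] (X : Matrix l m ℝ) (Y : Matrix m n ℝ) :
    (X * Y).map Complex.ofReal = X.map Complex.ofReal * Y.map Complex.ofReal :=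
  Matrix.map_mul (f := Complex.ofRealHom)

theorem mem_spectrum_mul_comm_of_ne_zero {K m n : Type*} [Field K] [Fintype m] [DecidableEq m]
    [Fintype n] [DecidableEq n] (X : Matrix m n K) (Y : Matrix n m K) {z : K} (hz : z ≠ 0)
    (h : z ∈ spectrum K (X * Y)) : z ∈ spectrum K (Y * X) := by
  rw [mem_spectrum_iff_isRoot_charpoly] at h ⊢
  have := congrArg (Polynomial.eval z) (charpoly_mul_comm' X Y)
  simp only [Polynomial.eval_mul, Polynomial.eval_pow, Polynomial.eval_X, h.eq_zero,
    mul_zero] at this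
  exact (mul_eq_zero.mp this.symm).resolve_left (pow_ne_zero _ hz)

section PosSemidef

open scoped ComplexOrder MatrixOrder

variable {𝕜 N : Type*} [RCLike 𝕜] [Fintype N]

theorem isClosed_setOf_posSemidef : IsClosed {X : Matrix N N 𝕜 | X.PosSemidef} := by
  simp only [posSemidef_iff_dotProduct_mulVec, Set.ofPred_and, Set.ofPred_forall]
  refine (isClosed_eq continuous_id.matrix_conjTranspose continuous_id).inter
    (isClosed_iInter fun x => isClosed_le continuous_const ?_)
  exact continuous_const.dotProduct (continuous_id.matrix_mulVec continuous_const)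

theorem PosSemidef.trace_mul_nonneg {X Y : Matrix N N 𝕜} (hX : X.PosSemidef)
    (hY : Y.PosSemidef) : 0 ≤ (X * Y).trace := by
  classical
  obtain ⟨B, rfl⟩ := CStarAlgebra.nonneg_iff_eq_star_mul_self.mp hX.nonneg
  rw [Matrix.mul_assoc, trace_mul_comm, star_eq_conjTranspose]
  exact (hY.mul_mul_conjTranspose_same B).trace_nonneg

end PosSemidef

end Matrix

theorem spectrum.exists_norm_pow_le_of_spectralRadius_lt_one {A : Type*} [NormedRing A]
    [NormedAlgebra ℂ A] [CompleteSpace A] {a : A} (h : spectralRadius ℂ a < 1) :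
    ∃ r : ℝ, 0 ≤ r ∧ r < 1 ∧ ∀ᶠ k in atTop, ‖a ^ k‖ ≤ r ^ k := by
  obtain ⟨c, hac, hc1⟩ := exists_between h
  have hc : c ≠ ⊤ := ne_top_of_lt hc1
  refine ⟨c.toReal, ENNReal.toReal_nonneg,
    ENNReal.toReal_lt_of_lt_ofReal (by simpa using hc1), ?_⟩
  filter_upwards [(pow_norm_pow_one_div_tendsto_nhds_spectralRadius a).eventually_lt_const hac,
    eventually_ge_atTop 1] with k hk hk1
  rw [← ENNReal.ofReal_toReal hc, ENNReal.ofReal_lt_ofReal_iff_of_nonneg (by positivity), one_div,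
    Real.rpow_inv_lt_iff_of_pos (norm_nonneg _) ENNReal.toReal_nonneg (by positivity),
    Real.rpow_natCast] at hk
  exact hk.le

section SpectralRadius

variable {m n N : Type*} [Fintype m] [DecidableEq m] [Fintype n] [DecidableEq n]
  [Fintype N] [DecidableEq N]

theorem norm_le_specRad (M : Matrix N N ℝ) {z : ℂ} (hz : z ∈ spectrum ℂ (M.map Complex.ofReal)) :
    ‖z‖ ≤ specRad M :=
  le_csSup ((Matrix.finite_spectrum _).image _).bddAbove ⟨z, hz, rfl⟩

theorem specRad_nonneg (M : Matrix N N ℝ) : 0 ≤ specRad M :=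
  Real.sSup_nonneg fun _ ⟨_, _, hz⟩ => hz ▸ norm_nonneg _

theorem specRad_mul_comm_le (X : Matrix m n ℝ) (Y : Matrix n m ℝ) :
    specRad (X * Y) ≤ specRad (Y * X) := by
  refine Real.sSup_le (fun _ ⟨z, hz, hzr⟩ => hzr ▸ ?_) (specRad_nonneg _)
  rcases eq_or_ne z 0 with rfl | hz0
  · simpa using specRad_nonneg _
  rw [Matrix.map_ofReal_mul] at hz
  refine norm_le_specRad _ ?_
  rw [Matrix.map_ofReal_mul]
  exact Matrix.mem_spectrum_mul_comm_of_ne_zero _ _ hz0 hz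

theorem specRad_mul_comm (X : Matrix m n ℝ) (Y : Matrix n m ℝ) :
    specRad (X * Y) = specRad (Y * X) :=
  le_antisymm (specRad_mul_comm_le X Y) (specRad_mul_comm_le Y X)

theorem spectralRadius_map_ofReal_le (M : Matrix N N ℝ) :
    spectralRadius ℂ (M.map Complex.ofReal) ≤ ENNReal.ofReal (specRad M) :=
  iSup₂_le fun z hz => by
    rw [← ENNReal.ofReal_coe_nnreal, coe_nnnorm]
    exact ENNReal.ofReal_le_ofReal (norm_le_specRad M hz)

end SpectralRadius

section Frobenius

open scoped Matrix.Norms.Frobenius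

variable {N : Type*} [Fintype N] [DecidableEq N]

theorem exists_norm_pow_le_of_specRad_lt_one {M : Matrix N N ℝ} (hM : specRad M < 1) :
    ∃ r : ℝ, 0 ≤ r ∧ r < 1 ∧ ∀ᶠ k in atTop, ‖M ^ k‖ ≤ r ^ k := by
  have hρ : spectralRadius ℂ (M.map Complex.ofReal) < 1 :=
    (spectralRadius_map_ofReal_le M).trans_lt (ENNReal.ofReal_lt_one.mpr hM)
  obtain ⟨r, hr0, hr1, hr⟩ := spectrum.exists_norm_pow_le_of_spectralRadius_lt_one hρ
  refine ⟨r, hr0, hr1, hr.mono fun k hk => ?_⟩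
  have hpow : M.map Complex.ofReal ^ k = (M ^ k).map Complex.ofReal :=
    (Matrix.map_pow (f := Complex.ofRealHom) M k).symm
  rwa [hpow, Matrix.frobenius_norm_map_eq _ _ Complex.norm_real] at hk

theorem tendsto_pow_atTop_nhds_zero_of_specRad_lt_one {M : Matrix N N ℝ} (hM : specRad M < 1) :
    Tendsto (fun k => M ^ k) atTop (𝓝 0) := by
  obtain ⟨r, hr0, hr1, hr⟩ := exists_norm_pow_le_of_specRad_lt_one hM
  exact squeeze_zero_norm' hr (tendsto_pow_atTop_nhds_zero_of_lt_one hr0 hr1)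

theorem summable_pow_mul_mul_transpose_pow {M : Matrix N N ℝ} (hM : specRad M < 1)
    (Q : Matrix N N ℝ) : Summable fun k => M ^ k * Q * Mᵀ ^ k := by
  obtain ⟨r, hr0, hr1, hr⟩ := exists_norm_pow_le_of_specRad_lt_one hM
  have hgeom := summable_geometric_of_lt_one (mul_nonneg hr0 hr0)
    (mul_lt_one_of_nonneg_of_lt_one_left hr0 hr1 hr1.le)
  refine (hgeom.mul_left ‖Q‖).of_norm_bounded_eventually_nat (hr.mono fun k hk => ?_)
  calc ‖M ^ k * Q * Mᵀ ^ k‖ ≤ ‖M ^ k‖ * ‖Q‖ * ‖(M ^ k)ᵀ‖ := by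
        rw [Matrix.transpose_pow]
        exact (norm_mul_le _ _).trans
          (mul_le_mul_of_nonneg_right (norm_mul_le _ _) (norm_nonneg _))
    _ ≤ r ^ k * ‖Q‖ * r ^ k := by
        rw [Matrix.frobenius_norm_transpose]
        gcongr
    _ = ‖Q‖ * (r * r) ^ k := by ring

end Frobenius

section Lyapunov

variable {N : Type*} [Fintype N] [DecidableEq N] {M Q P : Matrix N N ℝ}

theorem lyapunov_eq_of_hasSum (h : HasSum (fun k => M ^ k * Q * Mᵀ ^ k) P) :
    M * P * Mᵀ + Q = P := by
  have hshift : HasSum (fun k => M ^ (k + 1) * Q * Mᵀ ^ (k + 1)) (M * P * Mᵀ) := by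
    have h' := (h.mul_left M).mul_right Mᵀ
    refine h'.congr_fun fun k => ?_
    rw [pow_succ' M k, pow_succ Mᵀ k]
    simp only [Matrix.mul_assoc]
  have h0 := (HasSum.zero_add (f := fun k => M ^ k * Q * Mᵀ ^ k) hshift).unique h
  rwa [pow_zero, pow_zero, Matrix.one_mul, Matrix.mul_one, add_comm] at h0

theorem isSymm_of_hasSum_pow_mul_mul_transpose_pow (hQ : Q.IsSymm)
    (h : HasSum (fun k => M ^ k * Q * Mᵀ ^ k) P) : P.IsSymm := by
  refine h.matrix_transpose.unique ?_
  simpa only [transpose_mul, transpose_pow, transpose_transpose, hQ.eq, Matrix.mul_assoc] using h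

theorem sum_range_pow_mul_lyapunov_defect (M Q P' : Matrix N N ℝ) (k : ℕ) :
    ∑ i ∈ Finset.range k, M ^ i * (P' - (M * P' * Mᵀ + Q)) * Mᵀ ^ i =
      P' - (∑ i ∈ Finset.range k, M ^ i * Q * Mᵀ ^ i + M ^ k * P' * Mᵀ ^ k) := by
  induction k with
  | zero => simp
  | succ k ih =>
    rw [Finset.sum_range_succ, ih, Finset.sum_range_succ, pow_succ M k, pow_succ' Mᵀ k]
    noncomm_ring

theorem posSemidef_sub_of_hasSum_pow_mul_mul_transpose_pow
    (hM : Tendsto (fun k => M ^ k) atTop (𝓝 0)) (h : HasSum (fun k => M ^ k * Q * Mᵀ ^ k) P)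
    {P' : Matrix N N ℝ} (hP' : (P' - (M * P' * Mᵀ + Q)).PosSemidef) : (P' - P).PosSemidef := by
  have hpartial : ∀ k, (P' - (∑ i ∈ Finset.range k, M ^ i * Q * Mᵀ ^ i +
      M ^ k * P' * Mᵀ ^ k)).PosSemidef := fun k => by
    rw [← sum_range_pow_mul_lyapunov_defect]
    refine posSemidef_sum _ fun i _ => ?_
    simpa only [conjTranspose_eq_transpose_of_trivial, transpose_pow] using
      hP'.mul_mul_conjTranspose_same (M ^ i)
  have htail : Tendsto (fun k => M ^ k * P' * Mᵀ ^ k) atTop (𝓝 0) := by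
    have hcont : Continuous fun X : Matrix N N ℝ => X * P' * Xᵀ :=
      (continuous_id.matrix_mul continuous_const).matrix_mul continuous_id.matrix_transpose
    simpa only [Function.comp_def, transpose_pow, transpose_zero, Matrix.mul_zero] using
      (hcont.tendsto 0).comp hM
  have hlim := tendsto_const_nhds (x := P').sub (h.tendsto_sum_nat.add htail)
  rw [add_zero] at hlim
  exact isClosed_setOf_posSemidef.mem_of_tendsto hlim (Eventually.of_forall hpartial)

end Lyapunov

theorem exists_isSymm_mul_mul_eq {N : Type*} [Fintype N] [DecidableEq N] {S X : Matrix N N ℝ}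
    (hS : S.PosDef) (hX : X.IsSymm) : ∃ P : Matrix N N ℝ, P.IsSymm ∧ S * P * S = X := by
  have hSt : Sᵀ = S := hS.isHermitian
  have hdet : IsUnit S.det := hS.isUnit.map detMonoidHom
  refine ⟨S⁻¹ * X * S⁻¹, ?_, ?_⟩
  · rw [IsSymm, transpose_mul, transpose_mul, transpose_nonsing_inv, hSt, hX.eq,
      Matrix.mul_assoc]
  · rw [← Matrix.mul_assoc, ← Matrix.mul_assoc, mul_nonsing_inv _ hdet, Matrix.one_mul,
      Matrix.mul_assoc, nonsing_inv_mul _ hdet, Matrix.mul_one]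

/-- Performance evaluation: for a stabilizing `F`, the series `P̂ = Σ_k A_F^k (A_Fᵀ)^k`
converges, the feasible set of the data-driven LMI is nonempty, and the minimum of
`trace(Λ·S·P·S)` over the feasible set equals `trace(Λ·P̂)` and is attained. -/
theorem performance_evaluation {n m : ℕ}
    (A : Matrix (Fin n) (Fin n) ℝ) (B : Matrix (Fin n) (Fin m) ℝ)
    (F : Matrix (Fin m) (Fin n) ℝ)
    (hF : specRad (A + B * F) < 1)
    (Λ : Matrix (Fin n ⊕ Fin m) (Fin n ⊕ Fin m) ℝ) (hΛ : Λ.PosSemidef)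
    (S : Matrix (Fin n ⊕ Fin m) (Fin n ⊕ Fin m) ℝ) (hS : S.PosDef)
    (H : Matrix (Fin n ⊕ Fin m) (Fin n ⊕ Fin m) ℝ)
    (hH : H = S * (Matrix.fromBlocks A B (F * A) (F * B))ᵀ) :
    Summable (fun k : ℕ =>
        (Matrix.fromBlocks A B (F * A) (F * B)) ^ k *
          ((Matrix.fromBlocks A B (F * A) (F * B))ᵀ) ^ k) ∧
      {P : Matrix (Fin n ⊕ Fin m) (Fin n ⊕ Fin m) ℝ |
          P.IsSymm ∧ (S * P * S - (Hᵀ * P * H + 1)).PosSemidef}.Nonempty ∧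
      IsLeast {t : ℝ | ∃ P : Matrix (Fin n ⊕ Fin m) (Fin n ⊕ Fin m) ℝ,
          (P.IsSymm ∧ (S * P * S - (Hᵀ * P * H + 1)).PosSemidef) ∧
            t = Matrix.trace (Λ * (S * P * S))}
        (Matrix.trace (Λ * ∑' k : ℕ,
          (Matrix.fromBlocks A B (F * A) (F * B)) ^ k *
            ((Matrix.fromBlocks A B (F * A) (F * B))ᵀ) ^ k)) := by
  set M := fromBlocks A B (F * A) (F * B)
  have hM : specRad M < 1 := by
    have hfactor : fromRows 1 F * fromCols A B = M := by
      simpa only [Matrix.one_mul] using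
        fromRows_mul_fromCols (1 : Matrix (Fin n) (Fin n) ℝ) F A B
    rwa [← hfactor, specRad_mul_comm, fromCols_mul_fromRows, Matrix.mul_one]
  have hsummable : Summable fun k => M ^ k * Mᵀ ^ k := by
    simpa only [Matrix.mul_one] using summable_pow_mul_mul_transpose_pow hM 1
  set Phat := ∑' k, M ^ k * Mᵀ ^ k
  have hPhat : HasSum (fun k => M ^ k * 1 * Mᵀ ^ k) Phat := by
    simpa only [Matrix.mul_one] using hsummable.hasSum
  have hHP : ∀ P, Hᵀ * P * H = M * (S * P * S) * Mᵀ := fun P => by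
    rw [hH, transpose_mul, transpose_transpose, show Sᵀ = S from hS.isHermitian]
    simp only [Matrix.mul_assoc]
  obtain ⟨P₀, hP₀, hSP₀S⟩ := exists_isSymm_mul_mul_eq hS
    (isSymm_of_hasSum_pow_mul_mul_transpose_pow isSymm_one hPhat)
  have hP₀feas : (S * P₀ * S - (Hᵀ * P₀ * H + 1)).PosSemidef := by
    rw [hHP, hSP₀S, lyapunov_eq_of_hasSum hPhat, sub_self]
    exact PosSemidef.zero
  refine ⟨hsummable, ⟨P₀, hP₀, hP₀feas⟩, ⟨P₀, ⟨hP₀, hP₀feas⟩, by rw [hSP₀S]⟩, ?_⟩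
  rintro _ ⟨P, ⟨-, hP⟩, rfl⟩
  rw [hHP] at hP
  have hle := hΛ.trace_mul_nonneg (posSemidef_sub_of_hasSum_pow_mul_mul_transpose_pow
    (tendsto_pow_atTop_nhds_zero_of_specRad_lt_one hM) hPhat hP)
  rwa [Matrix.mul_sub, trace_sub, sub_nonneg] at hle
end

section
/- Let A ∈ ℝ^{n×n}, B ∈ ℝ^{n×m}, Q ∈ ℝ^{n×n} symmetric positive semidefinite, R ∈ ℝ^{m×m} symmetric positive definite, and Λ := [[Q, 0], [0, R]] ∈ ℝ^{(n+m)×(n+m)}. Assume (A, B) is stabilizable (there exists F ∈ ℝ^{m×n} with ρ(A + B·F) < 1) and Q = Cᵀ·C for some C ∈ ℝ^{p×n} with (A, C) detectable (there exists L ∈ ℝ^{n×p} with ρ(A + L·C) < 1). Let X* ∈ ℝ^{n×n} be symmetric positive semidefinite satisfying the algebraic Riccati equation X* = Aᵀ·X*·A − Aᵀ·X*·B·(R + Bᵀ·X*·B)⁻¹·Bᵀ·X*·A + Q, and define P* := [[Q + Aᵀ·X*·A, Aᵀ·X*·B], [Bᵀ·X*·A, R + Bᵀ·X*·B]]. Define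 the value iteration P₀ := 0 and P_{k+1} := Λ + Tᵀ·(P_{k,11} − P_{k,12}·P_{k,22}⁻¹·P_{k,12}ᵀ)·T, where T := [A B] ∈ ℝ^{n×(n+m)} and P_{k,11} ∈ ℝ^{n×n}, P_{k,12} ∈ ℝ^{n×m}, P_{k,22} ∈ ℝ^{m×m} are the blocks of P_k (matrix inverse taken with the convention that a non-invertible matrix has inverse 0, as occurs at k = 0). Then P_k converges entrywise to P* as k → ∞. -/
open Matrix Filter Topology Complex Function
open scoped MatrixOrder ComplexOrder NNReal

theorem tendsto_pow_atTop_nhds_zero_of_spectralRadius_lt_one {A : Type*} [NormedRing A]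
    [NormedAlgebra ℂ A] [CompleteSpace A] {a : A} (ha : spectralRadius ℂ a < 1) :
    Tendsto (a ^ ·) atTop (𝓝 0) := by
  obtain ⟨r, hρr, hr1⟩ := exists_between ha
  lift r to ℝ≥0 using (hr1.trans ENNReal.one_lt_top).ne
  have hpow : ∀ᶠ k : ℕ in atTop, ‖a ^ k‖₊ ≤ r ^ k := by
    filter_upwards [(spectrum.pow_nnnorm_pow_one_div_tendsto_nhds_spectralRadius a)
      |>.eventually_lt_const hρr, eventually_ge_atTop 1] with k hk hk1
    have hk0 : (0 : ℝ) < k := by exact_mod_cast hk1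
    rw [← ENNReal.coe_rpow_of_nonneg _ (by positivity), ENNReal.coe_lt_coe, one_div,
      NNReal.rpow_inv_lt_iff hk0, NNReal.rpow_natCast] at hk
    exact hk.le
  refine squeeze_zero_norm' (hpow.mono fun k hk => ?_)
    (tendsto_pow_atTop_nhds_zero_of_lt_one r.coe_nonneg (by exact_mod_cast hr1))
  exact_mod_cast hk

namespace Matrix

variable {n m p : Type*}

theorem isClosed_setOf_posSemidef_s13 [Fintype n] : IsClosed {M : Matrix n n ℝ | M.PosSemidef} := by
  simp only [posSemidef_iff_dotProduct_mulVec, Set.ofPred_and, Set.ofPred_forall]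
  exact (isClosed_eq continuous_id.matrix_conjTranspose continuous_id).inter <|
    isClosed_iInter fun x => isClosed_le continuous_const <|
      continuous_const.dotProduct (continuous_id.matrix_mulVec continuous_const)

instance [Fintype n] : OrderClosedTopology (Matrix n n ℝ) where
  isClosed_le' := isClosed_setOf_posSemidef_s13.preimage (continuous_snd.sub continuous_fst)

theorem isSymm_of_nonneg [Fintype n] {X : Matrix n n ℝ} (h : 0 ≤ X) : X.IsSymm :=
  isHermitian_iff_isSymm.mp h.posSemidef.isHermitian

theorem dotProduct_mulVec_le_dotProduct_mulVec [Fintype n] {X Y : Matrix n n ℝ} (h : X ≤ Y)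
    (v : n → ℝ) : v ⬝ᵥ X *ᵥ v ≤ v ⬝ᵥ Y *ᵥ v := by
  simpa [sub_mulVec] using (le_iff.mp h).dotProduct_mulVec_nonneg v

theorem transpose_mul_mul_le_transpose_mul_mul [Fintype n] [Fintype m] {X Y : Matrix n n ℝ}
    (h : X ≤ Y) (M : Matrix n m ℝ) : Mᵀ * X * M ≤ Mᵀ * Y * M := by
  rw [le_iff, ← Matrix.sub_mul, ← Matrix.mul_sub, ← conjTranspose_eq_transpose_of_trivial]
  exact (le_iff.mp h).conjTranspose_mul_mul_same M

theorem transpose_mul_mul_nonneg [Fintype n] [Fintype m] {X : Matrix n n ℝ} (h : 0 ≤ X)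
    (M : Matrix n m ℝ) : 0 ≤ Mᵀ * X * M := by
  simpa using transpose_mul_mul_le_transpose_mul_mul h M

theorem transpose_mul_self_nonneg [Fintype n] [Fintype m] (M : Matrix m n ℝ) : 0 ≤ Mᵀ * M := by
  simpa [conjTranspose_eq_transpose_of_trivial] using (posSemidef_conjTranspose_mul_self M).nonneg

theorem posDef_add_transpose_mul_mul [Fintype n] [Fintype m] {R : Matrix m m ℝ} (hR : R.PosDef)
    {X : Matrix n n ℝ} (hX : 0 ≤ X) (B : Matrix n m ℝ) : (R + Bᵀ * X * B).PosDef :=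
  hR.add_posSemidef (transpose_mul_mul_nonneg hX B).posSemidef

theorem IsSymm.apply_eq_polarization [Fintype n] [DecidableEq n] {M : Matrix n n ℝ}
    (hM : M.IsSymm) (i j : n) :
    M i j = ((Pi.single i 1 + Pi.single j 1) ⬝ᵥ M *ᵥ (Pi.single i 1 + Pi.single j 1)
      - Pi.single i 1 ⬝ᵥ M *ᵥ Pi.single i 1 - Pi.single j 1 ⬝ᵥ M *ᵥ Pi.single j 1) / 2 := by
  simp only [hM.apply j i, mulVec_add, mulVec_single, MulOpposite.op_one, one_smul,
    dotProduct_add, add_dotProduct, single_dotProduct, col_apply, one_mul]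
  ring

theorem exists_tendsto_of_forall_exists_tendsto_dotProduct_mulVec {ι : Type*} [Fintype n]
    {l : Filter ι} {X : ι → Matrix n n ℝ} (hX : ∀ k, (X k).IsSymm)
    (hq : ∀ v, ∃ c, Tendsto (fun k => v ⬝ᵥ X k *ᵥ v) l (𝓝 c)) : ∃ L, Tendsto X l (𝓝 L) := by
  classical
  choose c hc using hq
  refine ⟨of fun i j => (c (Pi.single i 1 + Pi.single j 1) - c (Pi.single i 1)
    - c (Pi.single j 1)) / 2, tendsto_pi_nhds.2 fun i => tendsto_pi_nhds.2 fun j => ?_⟩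
  simp_rw [(hX _).apply_eq_polarization i j]
  exact (((hc _).sub (hc _)).sub (hc _)).div_const 2

theorem exists_tendsto_of_monotone_of_bddAbove [Fintype n] {X : ℕ → Matrix n n ℝ}
    (hmono : Monotone X) (hbdd : BddAbove (Set.range X)) : ∃ L, Tendsto X atTop (𝓝 L) := by
  obtain ⟨U, hU⟩ := hbdd
  have hmono' : Monotone fun k => X k - X 0 := fun k l hkl => sub_le_sub_right (hmono hkl) _
  obtain ⟨D, hD⟩ := exists_tendsto_of_forall_exists_tendsto_dotProduct_mulVec
    (fun k => isSymm_of_nonneg (sub_nonneg.2 (hmono k.zero_le))) fun v =>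
      ⟨_, tendsto_atTop_ciSup (fun k l hkl => dotProduct_mulVec_le_dotProduct_mulVec (hmono' hkl) v)
        ⟨v ⬝ᵥ (U - X 0) *ᵥ v, by
          rintro _ ⟨k, rfl⟩
          exact dotProduct_mulVec_le_dotProduct_mulVec (sub_le_sub_right (hU ⟨k, rfl⟩) _) v⟩⟩
  exact ⟨D + X 0, by simpa using hD.add_const (X 0)⟩

theorem nonpos_of_le_transpose_mul_mul [Fintype n] [DecidableEq n] {D M : Matrix n n ℝ}
    (hD : D ≤ Mᵀ * D * M) (hM : Tendsto (M ^ ·) atTop (𝓝 0)) : D ≤ 0 := by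
  have hpow : ∀ j : ℕ, D ≤ (M ^ j)ᵀ * D * M ^ j := by
    intro j
    induction j with
    | zero => simp
    | succ j ih =>
      calc D ≤ (M ^ j)ᵀ * D * M ^ j := ih
        _ ≤ (M ^ j)ᵀ * (Mᵀ * D * M) * M ^ j := transpose_mul_mul_le_transpose_mul_mul hD _
        _ = (M ^ (j + 1))ᵀ * D * M ^ (j + 1) := by
          simp only [pow_succ', transpose_mul, Matrix.mul_assoc]
  have hlim : Tendsto (fun j : ℕ => (M ^ j)ᵀ * D * M ^ j) atTop (𝓝 0) := by
    simpa only [comp_def, transpose_zero, Matrix.zero_mul, Matrix.mul_zero] using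
      ((by fun_prop : Continuous fun N : Matrix n n ℝ => Nᵀ * D * N).tendsto 0).comp hM
  exact ge_of_tendsto' hlim hpow

theorem map_ofReal_mul_s13 [Fintype m] (M : Matrix n m ℝ) (N : Matrix m p ℝ) :
    (M * N).map ofReal = M.map ofReal * N.map ofReal :=
  Matrix.map_mul (f := ofRealHom)

theorem map_ofReal_add (M N : Matrix n m ℝ) : (M + N).map ofReal = M.map ofReal + N.map ofReal :=
  Matrix.map_add _ ofReal_add M N

theorem map_ofReal_sub (M N : Matrix n m ℝ) : (M - N).map ofReal = M.map ofReal - N.map ofReal :=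
  Matrix.map_sub _ ofReal_sub M N

theorem map_ofReal_transpose (M : Matrix n m ℝ) : Mᵀ.map ofReal = (M.map ofReal)ᴴ := by
  rw [← conjTranspose_eq_transpose_of_trivial]
  exact conjTranspose_map _ fun x => (conj_ofReal x).symm

theorem map_ofReal_pow [Fintype n] [DecidableEq n] (M : Matrix n n ℝ) (k : ℕ) :
    (M ^ k).map ofReal = M.map ofReal ^ k :=
  map_pow ofRealHom.mapMatrix M k

theorem PosSemidef.map_ofReal [Fintype n] {S : Matrix n n ℝ} (hS : S.PosSemidef) :
    (S.map ofReal).PosSemidef := by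
  classical
  obtain ⟨T, rfl⟩ := CStarAlgebra.nonneg_iff_eq_star_mul_self.mp hS.nonneg
  rw [star_eq_conjTranspose, conjTranspose_eq_transpose_of_trivial, map_ofReal_mul_s13,
    map_ofReal_transpose]
  exact posSemidef_conjTranspose_mul_self _

theorem PosDef.map_ofReal [Fintype n] [DecidableEq n] {S : Matrix n n ℝ} (hS : S.PosDef) :
    (S.map ofReal).PosDef :=
  hS.posSemidef.map_ofReal.posDef_iff_isUnit.mpr (hS.isUnit.map ofRealHom.mapMatrix)

theorem star_dotProduct_conj_mulVec [Fintype n] [Fintype m] (N : Matrix n m ℂ)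
    (S : Matrix n n ℂ) (v : m → ℂ) :
    star v ⬝ᵥ (Nᴴ * S * N) *ᵥ v = star (N *ᵥ v) ⬝ᵥ S *ᵥ (N *ᵥ v) := by
  rw [← mulVec_mulVec, ← mulVec_mulVec, dotProduct_mulVec, ← star_mulVec]

theorem star_dotProduct_conjTranspose_mul_self_mulVec [Fintype n] [Fintype m]
    (N : Matrix n m ℂ) (v : m → ℂ) : star v ⬝ᵥ (Nᴴ * N) *ᵥ v = star (N *ᵥ v) ⬝ᵥ N *ᵥ v := by
  rw [← mulVec_mulVec, dotProduct_mulVec, ← star_mulVec]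

theorem mem_spectrum_iff_exists_mulVec_eq_smul {K : Type*} [Field K] [Fintype n] [DecidableEq n]
    (M : Matrix n n K) (μ : K) : μ ∈ spectrum K M ↔ ∃ v ≠ 0, M *ᵥ v = μ • v := by
  rw [← spectrum_toLin', ← Module.End.hasEigenvalue_iff_mem_spectrum]
  constructor
  · intro h
    obtain ⟨v, hv⟩ := h.exists_hasEigenvector
    exact ⟨v, hv.2, by simpa using hv.apply_eq_smul⟩
  · rintro ⟨v, hv0, hv⟩
    exact Module.End.hasEigenvalue_of_hasEigenvector
      ⟨by simpa [Module.End.mem_eigenspace_iff] using hv, hv0⟩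

variable [Fintype n] [Fintype m] [Fintype p]

theorem tendsto_pow_atTop_nhds_zero [DecidableEq n] {M : Matrix n n ℝ}
    (hM : ∀ z ∈ spectrum ℂ (M.map ofReal), ‖z‖ < 1) : Tendsto (M ^ ·) atTop (𝓝 0) := by
  cases isEmpty_or_nonempty n
  · exact tendsto_const_nhds.congr fun _ => Subsingleton.elim _ _
  -- `Matrix` carries no global algebra norm; any one will do for Gelfand's formula.
  let : NormedRing (Matrix n n ℂ) := Matrix.linftyOpNormedRing
  let : NormedAlgebra ℂ (Matrix n n ℂ) := Matrix.linftyOpNormedAlgebra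
  have hρ : spectralRadius ℂ (M.map ofReal) < 1 := by
    simpa using spectrum.spectralRadius_lt_of_forall_lt (M.map ofReal) (r := 1)
      fun z hz => by exact_mod_cast hM z hz
  have hre : Continuous fun N : Matrix n n ℂ => N.map re := continuous_id.matrix_map continuous_re
  simpa [comp_def, ← map_ofReal_pow, Matrix.map_map] using
    (hre.tendsto 0).comp (tendsto_pow_atTop_nhds_zero_of_spectralRadius_lt_one hρ)

theorem norm_le_specRad [DecidableEq n] {M : Matrix n n ℝ} {z : ℂ}
    (hz : z ∈ spectrum ℂ (M.map ofReal)) : ‖z‖ ≤ specRad M :=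
  le_csSup ((M.map ofReal).finite_spectrum.image _).bddAbove ⟨z, hz, rfl⟩

/-- Here `v*Wv = (1 - |z|²) v*Xv ≤ 0`. -/
theorem star_dotProduct_mulVec_eq_zero_of_eq_add_of_one_le_norm {X W M : Matrix n n ℝ}
    (hX : 0 ≤ X) (hW : 0 ≤ W) (hXWM : X = W + Mᵀ * X * M) {z : ℂ} {v : n → ℂ}
    (hv : M.map ofReal *ᵥ v = z • v) (hz : 1 ≤ ‖z‖) :
    star v ⬝ᵥ W.map ofReal *ᵥ v = 0 := by
  have hx : star v ⬝ᵥ X.map ofReal *ᵥ v =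
      star v ⬝ᵥ W.map ofReal *ᵥ v + (‖z‖ ^ 2 : ℂ) * (star v ⬝ᵥ X.map ofReal *ᵥ v) := by
    conv_lhs => rw [hXWM, map_ofReal_add, map_ofReal_mul_s13, map_ofReal_mul_s13, map_ofReal_transpose]
    rw [add_mulVec, dotProduct_add, star_dotProduct_conj_mulVec, hv, star_smul, mulVec_smul,
      smul_dotProduct, dotProduct_smul, smul_eq_mul, smul_eq_mul, ← mul_assoc, star_def,
      conj_mul']
  have hW' : star v ⬝ᵥ W.map ofReal *ᵥ v =
      (1 - ‖z‖ ^ 2 : ℂ) * (star v ⬝ᵥ X.map ofReal *ᵥ v) := by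
    linear_combination -hx
  refine le_antisymm ?_ (hW.posSemidef.map_ofReal.dotProduct_mulVec_nonneg v)
  rw [hW']
  refine mul_nonpos_of_nonpos_of_nonneg ?_ (hX.posSemidef.map_ofReal.dotProduct_mulVec_nonneg v)
  rw [sub_nonpos]
  exact_mod_cast one_le_pow₀ hz

theorem norm_lt_one_of_mem_spectrum_of_detectable [DecidableEq n] [DecidableEq m]
    {A X : Matrix n n ℝ} {B : Matrix n m ℝ} {C : Matrix p n ℝ} {R : Matrix m m ℝ}
    {K : Matrix m n ℝ} {L : Matrix n p ℝ} (hR : R.PosDef) (hX : 0 ≤ X)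
    (hXK : X = Cᵀ * C + Kᵀ * R * K + (A - B * K)ᵀ * X * (A - B * K))
    (hL : specRad (A + L * C) < 1) {z : ℂ} (hz : z ∈ spectrum ℂ ((A - B * K).map ofReal)) :
    ‖z‖ < 1 := by
  by_contra! hz1
  obtain ⟨v, hv0, hv⟩ := (mem_spectrum_iff_exists_mulVec_eq_smul _ _).1 hz
  have hW := star_dotProduct_mulVec_eq_zero_of_eq_add_of_one_le_norm hX
    (add_nonneg (transpose_mul_self_nonneg C) (transpose_mul_mul_nonneg hR.posSemidef.nonneg K))
    hXK hv hz1
  simp only [map_ofReal_add, map_ofReal_mul_s13, map_ofReal_transpose, add_mulVec, dotProduct_add,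
    star_dotProduct_conjTranspose_mul_self_mulVec, star_dotProduct_conj_mulVec] at hW
  obtain ⟨hCv, hKv⟩ := (add_eq_zero_iff_of_nonneg (dotProduct_star_self_nonneg _)
    (hR.map_ofReal.posSemidef.dotProduct_mulVec_nonneg _)).1 hW
  replace hCv : C.map ofReal *ᵥ v = 0 := dotProduct_star_self_eq_zero.1 hCv
  replace hKv : K.map ofReal *ᵥ v = 0 := by
    by_contra hKv'
    exact (hR.map_ofReal.dotProduct_mulVec_pos hKv').ne' hKv
  have hzL : z ∈ spectrum ℂ ((A + L * C).map ofReal) := by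
    refine (mem_spectrum_iff_exists_mulVec_eq_smul _ _).2 ⟨v, hv0, ?_⟩
    rw [map_ofReal_sub, map_ofReal_mul_s13, sub_mulVec, ← mulVec_mulVec, hKv, mulVec_zero,
      sub_zero] at hv
    rw [map_ofReal_add, map_ofReal_mul_s13, add_mulVec, ← mulVec_mulVec, hCv, mulVec_zero, add_zero,
      hv]
  linarith [norm_le_specRad hzL]

end Matrix

section Lyapunov

variable {n m : Type*} [Fintype n] [Fintype m]
  (A : Matrix n n ℝ) (B : Matrix n m ℝ) (Q : Matrix n n ℝ) (R : Matrix m m ℝ)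

def lyapunovMap (K : Matrix m n ℝ) (X : Matrix n n ℝ) : Matrix n n ℝ :=
  Q + Kᵀ * R * K + (A - B * K)ᵀ * X * (A - B * K)

variable {A B Q R}

theorem lyapunovMap_mono (K : Matrix m n ℝ) {X Y : Matrix n n ℝ} (h : X ≤ Y) :
    lyapunovMap A B Q R K X ≤ lyapunovMap A B Q R K Y :=
  add_le_add_right (transpose_mul_mul_le_transpose_mul_mul h _) _

theorem lyapunovMap_sub_lyapunovMap (K : Matrix m n ℝ) (X Y : Matrix n n ℝ) :
    lyapunovMap A B Q R K X - lyapunovMap A B Q R K Y =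
      (A - B * K)ᵀ * (X - Y) * (A - B * K) := by
  simp only [lyapunovMap, Matrix.mul_sub, Matrix.sub_mul]
  abel

theorem lyapunovMap_nonneg (hQ : 0 ≤ Q) (hR : 0 ≤ R) {X : Matrix n n ℝ} (hX : 0 ≤ X)
    (K : Matrix m n ℝ) : 0 ≤ lyapunovMap A B Q R K X :=
  add_nonneg (add_nonneg hQ (transpose_mul_mul_nonneg hR K)) (transpose_mul_mul_nonneg hX _)

end Lyapunov

section Riccati

variable {n m : Type*} [Fintype n] [Fintype m] [DecidableEq m]
  (A : Matrix n n ℝ) (B : Matrix n m ℝ) (Q : Matrix n n ℝ) (R : Matrix m m ℝ)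

noncomputable def riccatiMap (X : Matrix n n ℝ) : Matrix n n ℝ :=
  Q + Aᵀ * X * A - Aᵀ * X * B * (R + Bᵀ * X * B)⁻¹ * (Bᵀ * X * A)

noncomputable def riccatiGain (X : Matrix n n ℝ) : Matrix m n ℝ :=
  (R + Bᵀ * X * B)⁻¹ * (Bᵀ * X * A)

variable {A B Q R}

theorem lyapunovMap_eq_riccatiMap_add (hR : R.PosDef) {X : Matrix n n ℝ} (hX : 0 ≤ X)
    (K : Matrix m n ℝ) :
    lyapunovMap A B Q R K X = riccatiMap A B Q R X +
      (K - riccatiGain A B R X)ᵀ * (R + Bᵀ * X * B) * (K - riccatiGain A B R X) := by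
  have hG := posDef_add_transpose_mul_mul hR hX B
  have hGu : IsUnit (R + Bᵀ * (X * B)).det := by
    simpa [Matrix.mul_assoc] using hG.isUnit.map detMonoidHom
  have hGT : (R + Bᵀ * (X * B))⁻¹ᵀ = (R + Bᵀ * (X * B))⁻¹ := by
    simpa [Matrix.mul_assoc, transpose_nonsing_inv] using
      congrArg (·⁻¹) (isHermitian_iff_isSymm.mp hG.isHermitian).eq
  simp only [lyapunovMap, riccatiMap, riccatiGain, transpose_sub, transpose_mul,
    transpose_transpose, (isSymm_of_nonneg hX).eq, hGT, Matrix.sub_mul, Matrix.mul_sub,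
    Matrix.mul_assoc, mul_nonsing_inv_cancel_left _ _ hGu, nonsing_inv_mul_cancel_left _ _ hGu]
  simp only [Matrix.add_mul, Matrix.mul_add, Matrix.mul_assoc]
  abel

theorem riccatiMap_eq_lyapunovMap_riccatiGain (hR : R.PosDef) {X : Matrix n n ℝ}
    (hX : 0 ≤ X) : riccatiMap A B Q R X = lyapunovMap A B Q R (riccatiGain A B R X) X := by
  simp [lyapunovMap_eq_riccatiMap_add hR hX]

theorem riccatiMap_le_lyapunovMap (hR : R.PosDef) {X : Matrix n n ℝ} (hX : 0 ≤ X)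
    (K : Matrix m n ℝ) : riccatiMap A B Q R X ≤ lyapunovMap A B Q R K X := by
  rw [lyapunovMap_eq_riccatiMap_add hR hX K]
  exact le_add_of_nonneg_right
    (transpose_mul_mul_nonneg (posDef_add_transpose_mul_mul hR hX B).posSemidef.nonneg _)

theorem riccatiMap_nonneg (hQ : 0 ≤ Q) (hR : R.PosDef) {X : Matrix n n ℝ} (hX : 0 ≤ X) :
    0 ≤ riccatiMap A B Q R X := by
  rw [riccatiMap_eq_lyapunovMap_riccatiGain hR hX]
  exact lyapunovMap_nonneg hQ hR.posSemidef.nonneg hX _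

theorem riccatiMap_mono (hR : R.PosDef) {X Y : Matrix n n ℝ} (hX : 0 ≤ X) (hXY : X ≤ Y) :
    riccatiMap A B Q R X ≤ riccatiMap A B Q R Y :=
  calc riccatiMap A B Q R X
      ≤ lyapunovMap A B Q R (riccatiGain A B R Y) X := riccatiMap_le_lyapunovMap hR hX _
    _ ≤ lyapunovMap A B Q R (riccatiGain A B R Y) Y := lyapunovMap_mono _ hXY
    _ = riccatiMap A B Q R Y := (riccatiMap_eq_lyapunovMap_riccatiGain hR (hX.trans hXY)).symm

variable (A B Q) in
theorem continuousAt_riccatiMap {X : Matrix n n ℝ} (hX : IsUnit (R + Bᵀ * X * B).det) :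
    ContinuousAt (riccatiMap A B Q R) X := by
  have hinv : ContinuousAt (fun Y : Matrix n n ℝ => (R + Bᵀ * Y * B)⁻¹) X :=
    (continuousAt_matrix_inv _ (NormedRing.inverse_continuousAt hX.unit)).comp
      (f := fun Y => R + Bᵀ * Y * B) (by fun_prop)
  unfold riccatiMap
  fun_prop

theorem riccatiMap_iterate_nonneg (hQ : 0 ≤ Q) (hR : R.PosDef) (k : ℕ) :
    0 ≤ (riccatiMap A B Q R)^[k] 0 := by
  induction k with
  | zero => exact le_rfl
  | succ k ih => exact iterate_succ_apply' .. ▸ riccatiMap_nonneg hQ hR ih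

theorem monotone_riccatiMap_iterate (hQ : 0 ≤ Q) (hR : R.PosDef) :
    Monotone fun k => (riccatiMap A B Q R)^[k] 0 := by
  refine monotone_nat_of_le_succ fun k => ?_
  induction k with
  | zero => exact riccatiMap_nonneg hQ hR le_rfl
  | succ k ih =>
    simp only [iterate_succ_apply'] at ih ⊢
    exact riccatiMap_mono hR (riccatiMap_iterate_nonneg hQ hR k) ih

theorem riccatiMap_iterate_le (hQ : 0 ≤ Q) (hR : R.PosDef) {X : Matrix n n ℝ} (hX0 : 0 ≤ X)
    (hX : IsFixedPt (riccatiMap A B Q R) X) (k : ℕ) : (riccatiMap A B Q R)^[k] 0 ≤ X := by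
  induction k with
  | zero => exact hX0
  | succ k ih =>
    rw [iterate_succ_apply', ← hX.eq]
    exact riccatiMap_mono hR (riccatiMap_iterate_nonneg hQ hR k) ih

variable {p : Type*} [Fintype p] [DecidableEq n] {C : Matrix p n ℝ} {L : Matrix n p ℝ}

theorem le_of_isFixedPt_riccatiMap (hQC : Q = Cᵀ * C) (hR : R.PosDef)
    (hL : specRad (A + L * C) < 1) {X Y : Matrix n n ℝ} (hX0 : 0 ≤ X)
    (hX : IsFixedPt (riccatiMap A B Q R) X) (hY0 : 0 ≤ Y) (hY : IsFixedPt (riccatiMap A B Q R) Y) :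
    X ≤ Y := by
  set K := riccatiGain A B R Y
  have hYK : Y = lyapunovMap A B Q R K Y := by
    rw [← riccatiMap_eq_lyapunovMap_riccatiGain hR hY0, hY.eq]
  have hstable : Tendsto ((A - B * K) ^ ·) atTop (𝓝 0) :=
    tendsto_pow_atTop_nhds_zero fun z hz =>
      norm_lt_one_of_mem_spectrum_of_detectable hR hY0 (by rwa [lyapunovMap, hQC] at hYK) hL hz
  have hXK : X ≤ lyapunovMap A B Q R K X := by
    simpa only [hX.eq] using riccatiMap_le_lyapunovMap (A := A) (B := B) (Q := Q) hR hX0 K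
  have hgap : X - Y ≤ (A - B * K)ᵀ * (X - Y) * (A - B * K) := by
    rw [← lyapunovMap_sub_lyapunovMap (Q := Q) (R := R) K X Y, ← hYK]
    exact sub_le_sub_right hXK Y
  exact sub_nonpos.1 (nonpos_of_le_transpose_mul_mul hgap hstable)

theorem tendsto_riccatiMap_iterate (hQC : Q = Cᵀ * C) (hR : R.PosDef)
    (hL : specRad (A + L * C) < 1) {X : Matrix n n ℝ} (hX0 : 0 ≤ X)
    (hX : IsFixedPt (riccatiMap A B Q R) X) :
    Tendsto (fun k => (riccatiMap A B Q R)^[k] 0) atTop (𝓝 X) := by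
  have hQ : 0 ≤ Q := hQC ▸ transpose_mul_self_nonneg C
  obtain ⟨Y, hlim⟩ := exists_tendsto_of_monotone_of_bddAbove (monotone_riccatiMap_iterate hQ hR)
    ⟨X, by rintro _ ⟨k, rfl⟩; exact riccatiMap_iterate_le hQ hR hX0 hX k⟩
  have hY0 : 0 ≤ Y := ge_of_tendsto' hlim (riccatiMap_iterate_nonneg hQ hR)
  have hY : IsFixedPt (riccatiMap A B Q R) Y := by
    have hcont := continuousAt_riccatiMap A B Q
      ((isUnit_iff_isUnit_det _).1 (posDef_add_transpose_mul_mul hR hY0 B).isUnit)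
    refine tendsto_nhds_unique ?_ ((tendsto_add_atTop_iff_nat 1).2 hlim)
    simpa only [comp_def, iterate_succ_apply'] using hcont.tendsto.comp hlim
  rwa [le_antisymm (le_of_isFixedPt_riccatiMap hQC hR hL hX0 hX hY0 hY)
    (le_of_isFixedPt_riccatiMap hQC hR hL hY0 hY hX0 hX)]

end Riccati

section QFunction

variable {n m : Type*}

noncomputable def schurCompl [Fintype m] [DecidableEq m] (P : Matrix (n ⊕ m) (n ⊕ m) ℝ) :
    Matrix n n ℝ :=
  P.toBlocks₁₁ - P.toBlocks₁₂ * P.toBlocks₂₂⁻¹ * P.toBlocks₁₂ᵀ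

theorem schurCompl_zero [Fintype m] [DecidableEq m] :
    schurCompl (0 : Matrix (n ⊕ m) (n ⊕ m) ℝ) = 0 := by
  simp [schurCompl, ← fromBlocks_zero]

variable [Fintype n]
  (A : Matrix n n ℝ) (B : Matrix n m ℝ) (Q : Matrix n n ℝ) (R : Matrix m m ℝ)

def qFunctionMatrix (X : Matrix n n ℝ) : Matrix (n ⊕ m) (n ⊕ m) ℝ :=
  fromBlocks Q 0 0 R + (fromCols A B)ᵀ * X * fromCols A B

theorem qFunctionMatrix_eq_fromBlocks (X : Matrix n n ℝ) :
    qFunctionMatrix A B Q R X =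
      fromBlocks (Q + Aᵀ * X * A) (Aᵀ * X * B) (Bᵀ * X * A) (R + Bᵀ * X * B) := by
  rw [qFunctionMatrix, transpose_fromCols, fromRows_mul, fromRows_mul_fromCols, fromBlocks_add,
    zero_add, zero_add]

theorem continuous_qFunctionMatrix : Continuous (qFunctionMatrix A B Q R) := by
  unfold qFunctionMatrix
  fun_prop

variable [Fintype m] [DecidableEq m]

theorem schurCompl_qFunctionMatrix {X : Matrix n n ℝ} (hX : X.IsSymm) :
    schurCompl (qFunctionMatrix A B Q R X) = riccatiMap A B Q R X := by
  rw [schurCompl, qFunctionMatrix_eq_fromBlocks, toBlocks_fromBlocks₁₁, toBlocks_fromBlocks₁₂,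
    toBlocks_fromBlocks₂₂, riccatiMap]
  simp only [transpose_mul, transpose_transpose, hX.eq, Matrix.mul_assoc]

end QFunction

theorem value_iteration_convergence_general {n m p : ℕ}
    (A : Matrix (Fin n) (Fin n) ℝ) (B : Matrix (Fin n) (Fin m) ℝ)
    (Q : Matrix (Fin n) (Fin n) ℝ)
    (R : Matrix (Fin m) (Fin m) ℝ) (hR : R.PosDef)
    (C : Matrix (Fin p) (Fin n) ℝ) (hQC : Q = Cᵀ * C)
    (hdet : ∃ L : Matrix (Fin n) (Fin p) ℝ, specRad (A + L * C) < 1)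
    (Xs : Matrix (Fin n) (Fin n) ℝ) (hXs : Xs.PosSemidef)
    (hriccati : Xs =
      Aᵀ * Xs * A - Aᵀ * Xs * B * (R + Bᵀ * Xs * B)⁻¹ * (Bᵀ * Xs * A) + Q)
    (P : ℕ → Matrix (Fin n ⊕ Fin m) (Fin n ⊕ Fin m) ℝ)
    (hP0 : P 0 = 0)
    (hPrec : ∀ k, P (k + 1) =
      Matrix.fromBlocks Q 0 0 R +
        (Matrix.fromCols A B)ᵀ *
          (Matrix.toBlocks₁₁ (P k) -
            Matrix.toBlocks₁₂ (P k) * (Matrix.toBlocks₂₂ (P k))⁻¹ *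
              (Matrix.toBlocks₁₂ (P k))ᵀ) *
          (Matrix.fromCols A B)) :
    Tendsto P atTop (nhds
      (Matrix.fromBlocks (Q + Aᵀ * Xs * A) (Aᵀ * Xs * B)
        (Bᵀ * Xs * A) (R + Bᵀ * Xs * B))) := by
  obtain ⟨L, hL⟩ := hdet
  have hQ : 0 ≤ Q := hQC ▸ transpose_mul_self_nonneg C
  have hfix : IsFixedPt (riccatiMap A B Q R) Xs := by
    rw [IsFixedPt, riccatiMap, add_sub_assoc, add_comm]
    exact hriccati.symm
  have hPq : ∀ k, P (k + 1) = qFunctionMatrix A B Q R (schurCompl (P k)) := hPrec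
  have hschur : ∀ k, schurCompl (P k) = (riccatiMap A B Q R)^[k] 0 := by
    intro k
    induction k with
    | zero => rw [hP0, schurCompl_zero, iterate_zero_apply]
    | succ k ih =>
      rw [hPq, ih, schurCompl_qFunctionMatrix _ _ _ _
        (isSymm_of_nonneg (riccatiMap_iterate_nonneg hQ hR k)), iterate_succ_apply']
  rw [← qFunctionMatrix_eq_fromBlocks, ← tendsto_add_atTop_iff_nat 1]
  simp only [hPq, hschur]
  exact ((continuous_qFunctionMatrix A B Q R).tendsto Xs).comp
    (tendsto_riccatiMap_iterate hQC hR hL hXs.nonneg hfix)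

/-- Convergence of data-driven (Q-)value iteration: the iterates `P_k` of
`P_{k+1} = Λ + Tᵀ·(P_{k,11} − P_{k,12}·P_{k,22}⁻¹·P_{k,12}ᵀ)·T`, started from `P₀ = 0`,
converge to the optimal Q-function matrix `P*` built from the stabilizing solution `X*`
of the algebraic Riccati equation. -/
theorem value_iteration_convergence {n m p : ℕ}
    (A : Matrix (Fin n) (Fin n) ℝ) (B : Matrix (Fin n) (Fin m) ℝ)
    (Q : Matrix (Fin n) (Fin n) ℝ) (hQ : Q.PosSemidef)
    (R : Matrix (Fin m) (Fin m) ℝ) (hR : R.PosDef)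
    (hstab : ∃ F : Matrix (Fin m) (Fin n) ℝ, specRad (A + B * F) < 1)
    (C : Matrix (Fin p) (Fin n) ℝ) (hQC : Q = Cᵀ * C)
    (hdet : ∃ L : Matrix (Fin n) (Fin p) ℝ, specRad (A + L * C) < 1)
    (Xs : Matrix (Fin n) (Fin n) ℝ) (hXs : Xs.PosSemidef)
    (hriccati : Xs =
      Aᵀ * Xs * A - Aᵀ * Xs * B * (R + Bᵀ * Xs * B)⁻¹ * (Bᵀ * Xs * A) + Q)
    (P : ℕ → Matrix (Fin n ⊕ Fin m) (Fin n ⊕ Fin m) ℝ)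
    (hP0 : P 0 = 0)
    (hPrec : ∀ k, P (k + 1) =
      Matrix.fromBlocks Q 0 0 R +
        (Matrix.fromCols A B)ᵀ *
          (Matrix.toBlocks₁₁ (P k) -
            Matrix.toBlocks₁₂ (P k) * (Matrix.toBlocks₂₂ (P k))⁻¹ *
              (Matrix.toBlocks₁₂ (P k))ᵀ) *
          (Matrix.fromCols A B)) :
    Tendsto P atTop (nhds
      (Matrix.fromBlocks (Q + Aᵀ * Xs * A) (Aᵀ * Xs * B)
        (Bᵀ * Xs * A) (R + Bᵀ * Xs * B))) :=
  value_iteration_convergence_general A B Q R hR C hQC hdet Xs hXs hriccati P hP0 hPrec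
end
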